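/- arXiv:2005.06038 — 2 statements merged into one kernel-verified Lean document; each statement's English description precedes it below -/
import Mathlib

section
/- Let M ≥ 2 and let X_1, …, X_M ∈ ℝ^{d×N} be view data matrices. For every matrix W ∈ ℝ^{d×k} with Tr(W^T R_w W) > 0, the multi-view correlation objective is bounded above by one: (1/(M−1)) · Tr(W^T R_b W) / Tr(W^T R_w W) ≤ 1; equivalently, Tr(W^T R_b W) ≤ (M−1) · Tr(W^T R_w W). -/
/-!
With `Y_l = Wᵀ X_l`, both traces are sums over the entries `(i, j)` of `Y_l i j`, so it suffices
to prove, for real numbers `y_1, …, y_M`, that `∑_{l ≠ p} y_l y_p ≤ (M - 1) ∑_l y_l²`. The left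
side is `(∑ y_l)² - ∑ y_l²`, and `(∑ y_l)² ≤ M ∑ y_l²` by Cauchy–Schwarz.
-/

open Matrix BigOperators Finset

theorem Matrix.trace_mul_transpose_eq_sum {m n R : Type*} [Fintype m] [Fintype n]
    [AddCommMonoid R] [Mul R] (A B : Matrix m n R) :
    trace (A * Bᵀ) = ∑ i, ∑ j, A i j * B i j := by
  simp only [trace, diag, mul_apply, transpose_apply]

theorem Matrix.trace_conj_mul_transpose {m n k R : Type*} [Fintype m] [Fintype n] [Fintype k]
    [CommSemiring R] (W : Matrix m k R) (X Y : Matrix m n R) :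
    trace (Wᵀ * (X * Yᵀ) * W) = trace ((Wᵀ * X) * (Wᵀ * Y)ᵀ) := by
  rw [transpose_mul, transpose_transpose, Matrix.mul_assoc, Matrix.mul_assoc, Matrix.mul_assoc]

section

variable {ι R : Type*} [Fintype ι] [DecidableEq ι] [CommRing R] [LinearOrder R]
  [IsStrictOrderedRing R]

theorem sum_sum_sdiff_singleton_mul_le (f : ι → R) :
    ∑ p, ∑ l ∈ univ \ {p}, f l * f p ≤ ((Fintype.card ι : R) - 1) * ∑ l, f l ^ 2 := by
  have hoffDiag : ∑ p, ∑ l ∈ univ \ {p}, f l * f p = (∑ l, f l) ^ 2 - ∑ l, f l ^ 2 := by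
    simp_rw [sum_sdiff_eq_sub (subset_univ _), sum_singleton, sum_sub_distrib, ← sum_mul,
      ← mul_sum, sq]
  rw [hoffDiag, sub_one_mul]
  have hcs := sq_sum_le_card_mul_sum_sq (s := univ) (f := f)
  rw [card_univ] at hcs
  linarith

theorem Matrix.sum_sum_sdiff_singleton_trace_mul_transpose_le {m n : Type*} [Fintype m]
    [Fintype n] (A : ι → Matrix m n R) :
    ∑ p, ∑ l ∈ univ \ {p}, trace (A l * (A p)ᵀ)
      ≤ ((Fintype.card ι : R) - 1) * ∑ l, trace (A l * (A l)ᵀ) := by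
  calc ∑ p, ∑ l ∈ univ \ {p}, trace (A l * (A p)ᵀ)
      = ∑ i, ∑ j, ∑ p, ∑ l ∈ univ \ {p}, A l i j * A p i j := by
        simp only [trace_mul_transpose_eq_sum, sum_comm (s := univ \ {_}) (t := (univ : Finset m)),
          sum_comm (s := univ \ {_}) (t := (univ : Finset n))]
        rw [sum_comm]
        simp only [sum_comm (γ := ι) (t := (univ : Finset n))]
    _ ≤ ∑ i, ∑ j, ((Fintype.card ι : R) - 1) * ∑ l, A l i j ^ 2 := by
        gcongr
        exact sum_sum_sdiff_singleton_mul_le _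
    _ = ((Fintype.card ι : R) - 1) * ∑ l, trace (A l * (A l)ᵀ) := by
        simp only [trace_mul_transpose_eq_sum, ← sq, mul_sum]
        rw [sum_comm (γ := ι)]
        simp only [sum_comm (γ := ι) (t := (univ : Finset n))]

end

/-- the multi-view correlation objective is bounded above by one. -/
theorem mvcorr_le_one (M d N k : ℕ) (hM : 2 ≤ M)
    (X : Fin M → Matrix (Fin d) (Fin N) ℝ)
    (W : Matrix (Fin d) (Fin k) ℝ)
    (Rw Rb : Matrix (Fin d) (Fin d) ℝ)
    (hRw : Rw = (1 / (M : ℝ)) • ∑ l, X l * (X l)ᵀ)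
    (hRb : Rb = (1 / (M : ℝ)) • ∑ p, ∑ l ∈ Finset.univ \ {p}, X l * (X p)ᵀ)
    (hpos : 0 < (Wᵀ * Rw * W).trace) :
    (1 / ((M : ℝ) - 1)) * (Wᵀ * Rb * W).trace / (Wᵀ * Rw * W).trace ≤ 1 ∧
      (Wᵀ * Rb * W).trace ≤ ((M : ℝ) - 1) * (Wᵀ * Rw * W).trace := by
  have hM1 : (0 : ℝ) < M - 1 := by
    have : (2 : ℝ) ≤ M := by exact_mod_cast hM
    linarith
  have hbw : (Wᵀ * Rb * W).trace ≤ (M - 1) * (Wᵀ * Rw * W).trace := by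
    have key := sum_sum_sdiff_singleton_trace_mul_transpose_le (fun l => Wᵀ * X l)
    rw [Fintype.card_fin] at key
    simp only [hRw, hRb, Matrix.mul_smul, smul_mul, trace_smul, Matrix.mul_sum, Matrix.sum_mul,
      trace_sum, trace_conj_mul_transpose, smul_eq_mul]
    rw [mul_left_comm]
    exact mul_le_mul_of_nonneg_left key (by positivity)
  refine ⟨?_, hbw⟩
  rw [div_le_one hpos, one_div, inv_mul_le_iff₀ hM1]
  exact hbw
end

section
/- Let R_b, R_w, Σ_b, Σ_w be symmetric real d×d matrices, and set R_t = R_b + R_w and Σ_t = Σ_b + Σ_w. Let W ∈ ℝ^{d×d} satisfy Tr(W^T R_b W) ≥ 0, Tr(W^T R_w W) > 0, and Tr(W^T Σ_w W) − ‖R_w − Σ_w‖ · Tr(W W^T) > 0. Then Tr(W^T R_b W)/Tr(W^T R_w W) ≤ (Tr(W^T Σ_b W) + (‖R_t − Σ_t‖ + ‖R_w − Σ_w‖) · Tr(W W^T)) / (Tr(W^T Σ_w W) − ‖R_w − Σ_w‖ · Tr(W W^T)). -/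
/-!
Both traces are sums over the columns `w` of `W` of quadratic forms: `Tr(Wᵀ A W) = ∑ ⟪w, A w⟫` and
`Tr(W Wᵀ) = ∑ ‖w‖²`, so `|Tr(Wᵀ A W)| ≤ ‖A‖ Tr(W Wᵀ)` by Cauchy–Schwarz. Applied to `A = R_t − Σ_t`
and `A = R_w − Σ_w` this bounds the numerator `Tr(Wᵀ R_b W)` from above and the denominator
`Tr(Wᵀ R_w W)` from below by the corresponding population quantities; what is left is monotonicity
of `a / b` in both arguments.
-/

open Matrix

/-- The spectral (operator) norm of a real matrix. -/
noncomputable def specNorm {m n : ℕ} (A : Matrix (Fin m) (Fin n) ℝ) : ℝ :=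
  ‖LinearMap.toContinuousLinearMap (Matrix.toEuclideanLin A)‖

lemma abs_dotProduct_mulVec_self_le {n : ℕ} (A : Matrix (Fin n) (Fin n) ℝ) (x : Fin n → ℝ) :
    |x ⬝ᵥ A *ᵥ x| ≤ specNorm A * (x ⬝ᵥ x) := by
  set T := LinearMap.toContinuousLinearMap (Matrix.toEuclideanLin A)
  set v := WithLp.toLp 2 x
  have hv : ‖v‖ ^ 2 = x ⬝ᵥ x := by
    rw [← real_inner_self_eq_norm_sq, EuclideanSpace.inner_toLp_toLp, star_trivial]
  calc |x ⬝ᵥ A *ᵥ x| = |inner ℝ v (T v)| := by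
        rw [EuclideanSpace.inner_toLp_toLp, star_trivial, dotProduct_comm]; rfl
    _ ≤ ‖v‖ * ‖T v‖ := abs_real_inner_le_norm v (T v)
    _ ≤ ‖v‖ * (‖T‖ * ‖v‖) := by gcongr; exact T.le_opNorm v
    _ = specNorm A * (x ⬝ᵥ x) := by rw [← hv]; unfold specNorm; ring

lemma abs_trace_transpose_mul_mul_le {m n : ℕ} (A : Matrix (Fin n) (Fin n) ℝ)
    (W : Matrix (Fin n) (Fin m) ℝ) :
    |(Wᵀ * A * W).trace| ≤ specNorm A * (W * Wᵀ).trace := by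
  have hquad : (Wᵀ * A * W).trace = ∑ j, Wᵀ j ⬝ᵥ A *ᵥ Wᵀ j := by
    rw [Matrix.mul_assoc]; rfl
  have hnorm : (W * Wᵀ).trace = ∑ j, Wᵀ j ⬝ᵥ Wᵀ j := by
    rw [trace_mul_comm]; rfl
  rw [hquad, hnorm, Finset.mul_sum]
  exact (Finset.abs_sum_le_sum_abs _ _).trans
    (Finset.sum_le_sum fun j _ => abs_dotProduct_mulVec_self_le A (Wᵀ j))

lemma div_le_div_of_abs_sub_le {a b p q εt εw : ℝ} (ha : 0 ≤ a)
    (ht : |a + b - (p + q)| ≤ εt) (hw : |b - q| ≤ εw) (hq : 0 < q - εw) :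
    a / b ≤ (p + εt + εw) / (q - εw) := by
  have ht' := (abs_le.mp ht).2
  have hw' := (abs_le.mp hw).1
  have ha_le : a ≤ p + εt + εw := by linarith
  exact div_le_div₀ (ha.trans ha_le) ha_le hq (by linarith)

theorem mvcorr_perturbation_bound_general (d : ℕ)
    (Rb Rw Sb Sw : Matrix (Fin d) (Fin d) ℝ)
    (W : Matrix (Fin d) (Fin d) ℝ)
    (h1 : 0 ≤ (Wᵀ * Rb * W).trace)
    (h3 : 0 < (Wᵀ * Sw * W).trace - specNorm (Rw - Sw) * (W * Wᵀ).trace) :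
    (Wᵀ * Rb * W).trace / (Wᵀ * Rw * W).trace ≤
      ((Wᵀ * Sb * W).trace +
          (specNorm ((Rb + Rw) - (Sb + Sw)) + specNorm (Rw - Sw)) * (W * Wᵀ).trace) /
        ((Wᵀ * Sw * W).trace - specNorm (Rw - Sw) * (W * Wᵀ).trace) := by
  have htotal := abs_trace_transpose_mul_mul_le ((Rb + Rw) - (Sb + Sw)) W
  have hwithin := abs_trace_transpose_mul_mul_le (Rw - Sw) W
  simp only [Matrix.mul_add, Matrix.mul_sub, Matrix.add_mul, Matrix.sub_mul, trace_add,
    trace_sub] at htotal hwithin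
  rw [add_mul, ← add_assoc]
  exact div_le_div_of_abs_sub_le h1 htotal hwithin h3

/-- deterministic perturbation inequality for the bootstrapped multi-view
correlation: the subsampled trace ratio is controlled by the population ratio plus
spectral-norm deviations of the total-view and within-view covariances. -/
theorem mvcorr_perturbation_bound (d : ℕ)
    (Rb Rw Sb Sw : Matrix (Fin d) (Fin d) ℝ)
    (hRb : Rb.IsSymm) (hRw : Rw.IsSymm) (hSb : Sb.IsSymm) (hSw : Sw.IsSymm)
    (W : Matrix (Fin d) (Fin d) ℝ)
    (h1 : 0 ≤ (Wᵀ * Rb * W).trace)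
    (h2 : 0 < (Wᵀ * Rw * W).trace)
    (h3 : 0 < (Wᵀ * Sw * W).trace - specNorm (Rw - Sw) * (W * Wᵀ).trace) :
    (Wᵀ * Rb * W).trace / (Wᵀ * Rw * W).trace ≤
      ((Wᵀ * Sb * W).trace +
          (specNorm ((Rb + Rw) - (Sb + Sw)) + specNorm (Rw - Sw)) * (W * Wᵀ).trace) /
        ((Wᵀ * Sw * W).trace - specNorm (Rw - Sw) * (W * Wᵀ).trace) :=
  mvcorr_perturbation_bound_general d Rb Rw Sb Sw W h1 h3
end
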